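/- Assume the face F(α_{·e}) is non-degenerate. Fix σ⁰ ∈ ℝⁿ with σ⁰·α_{·e} = 0 and σ⁰·α_{·j} > 0 for every j ∉ Λ_e, fix τ⁰ ∈ ℝⁿ, a prime p, and θ ∈ ℚⁿ such that θ·α̂_e is a positive integer and θ·α_{·j} > 0 for all j; let q be the smallest positive integer with q·θ·α_{·j} ∈ ℕ≥1 for all j. Define, for X ∈ ℂ∖ℝ≤0 and Y ∈ ℂ, the function W̃(X,Y) = 1 + Σ_{j=1}^r a_j e^{−i(τ⁰·α_{·j})log p} X^{σ⁰·α_{·j}} Y^{q·θ·α_{·j}}, the powers X^{σ⁰·α_{·j}} taken with the principal branch, and let r_μ = {c ∈ ℂ : c^{q·θ·α̂_e} = e^{i(τ⁰·α̂_e)log p}·c₀ for some root c₀ of 1 + Σ_{j∈Λ_e} a_j T^{q_j}}. Then there exists ε₁ > 0, depending only on h and σ⁰ (in particular independent of p and of τ⁰), such that for every c ∈ r_μ there is a holomorphic function ω_c on H = {X ∈ ℂ∖ℝ≤0 : |X| < ε₁} satisfying W̃(X, ω_c(X)) = 0 for all X ∈ H and ω_c(X) → c as X → 0 in H; moreover |c|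 = |c₀|^{1/(q·θ·α̂_e)} for the corresponding root c₀. -/

import Mathlib

open Finset Complex

lemma aux_pow_sub_pow {y z : ℂ} {A : ℝ} (hy : ‖y‖ ≤ A) (hz : ‖z‖ ≤ A) (k : ℕ) :
    ‖y ^ k - z ^ k‖ ≤ k * A ^ (k - 1) * ‖y - z‖ := by
  have hA : 0 ≤ A := le_trans (norm_nonneg _) hy
  induction k with
  | zero => simp
  | succ k ih =>
    have hrw : y ^ (k+1) - z ^ (k+1) = y ^ k * (y - z) + (y ^ k - z ^ k) * z := by ring
    rw [hrw]
    have h1 : ‖y ^ k * (y - z)‖ ≤ A ^ k * ‖y - z‖ := by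
      rw [norm_mul, norm_pow]
      gcongr
    have h2 : ‖(y ^ k - z ^ k) * z‖ ≤ (k * A ^ (k - 1) * ‖y - z‖) * A := by
      rw [norm_mul]
      gcongr
    have h3 : (k * A ^ (k - 1) * ‖y - z‖) * A ≤ k * A ^ k * ‖y - z‖ := by
      cases k with
      | zero => simp
      | succ k' =>
        have heq : A ^ (k' + 1 - 1) * A = A ^ (k' + 1) := by
          rw [Nat.add_sub_cancel, ← pow_succ]
        refine le_of_eq ?_
        calc (↑(k'+1) * A ^ (k'+1-1) * ‖y - z‖) * A
            = ↑(k'+1) * (A ^ (k'+1-1) * A) * ‖y - z‖ := by ring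
          _ = ↑(k'+1) * A ^ (k'+1) * ‖y - z‖ := by rw [heq]
    calc ‖y ^ k * (y - z) + (y ^ k - z ^ k) * z‖
        ≤ ‖y ^ k * (y - z)‖ + ‖(y ^ k - z ^ k) * z‖ := norm_add_le _ _
      _ ≤ A ^ k * ‖y - z‖ + k * A ^ k * ‖y - z‖ := by
          refine add_le_add h1 (h2.trans h3)
      _ ≤ (k + 1 : ℕ) * A ^ ((k+1) - 1) * ‖y - z‖ := by
          rw [Nat.add_sub_cancel]
          push_cast; ring_nf; rfl

lemma aux_geom_dist {f : ℕ → ℂ} {C : ℝ}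
    (h : ∀ k, dist (f (k+1)) (f k) ≤ C * (1/2) ^ k) :
    ∀ k l, dist (f (k+l)) (f k) ≤ C * (1/2) ^ k * (2 - 2 * (1/2) ^ l) := by
  have hC : 0 ≤ C := by
    nlinarith [h 0, dist_nonneg (x := f 1) (y := f 0)]
  intro k l
  induction l with
  | zero => simp
  | succ l ih =>
    have step := h (k + l)
    calc dist (f (k + (l+1))) (f k)
        ≤ dist (f (k + l + 1)) (f (k + l)) + dist (f (k+l)) (f k) := by
          rw [show k + (l+1) = k + l + 1 by ring]; exact dist_triangle _ _ _
      _ ≤ C * (1/2) ^ (k+l) + C * (1/2) ^ k * (2 - 2 * (1/2) ^ l) := add_le_add step ih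
      _ = C * (1/2) ^ k * (2 - (1/2) ^ l) := by rw [pow_add]; ring
      _ ≤ C * (1/2) ^ k * (2 - 2 * (1/2) ^ (l+1)) := by
          rw [pow_succ]; ring_nf; rfl

noncomputable def seqY {r : ℕ} (co : Fin r → ℂ) (m : Fin r → ℕ) (c D : ℂ) : ℕ → ℂ
  | 0 => c
  | (k+1) => seqY co m c D k - (1 + ∑ j, co j * seqY co m c D k ^ m j) / D

lemma newton_contr {r : ℕ} (co : Fin r → ℂ) (m : Fin r → ℕ) (c D : ℂ) (δ : ℝ)
    (hD : D ≠ 0)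
    (hcontr : ∀ Y ∈ Metric.closedBall c δ,
      ‖(∑ j, co j * ((m j : ℂ) * Y ^ (m j - 1))) - D‖ ≤ ‖D‖ / 2) :
    ∀ y ∈ Metric.closedBall c δ, ∀ y' ∈ Metric.closedBall c δ,
      dist ((fun Y => Y - (1 + ∑ j, co j * Y ^ m j) / D) y)
           ((fun Y => Y - (1 + ∑ j, co j * Y ^ m j) / D) y') ≤ (1/2) * dist y y' := by
  intro y hy y' hy'
  have hball : Convex ℝ (Metric.closedBall c δ) := convex_closedBall c δ
  have hderiv : ∀ Y ∈ Metric.closedBall c δ,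
      HasDerivWithinAt (fun Y => Y - (1 + ∑ j, co j * Y ^ m j) / D)
        (1 - (∑ j, co j * ((m j : ℂ) * Y ^ (m j - 1))) / D) (Metric.closedBall c δ) Y := by
    intro Y hY
    have h1 : HasDerivAt (fun Y : ℂ => 1 + ∑ j, co j * Y ^ m j)
        (∑ j, co j * ((m j : ℂ) * Y ^ (m j - 1))) Y := by
      have h2 : HasDerivAt (fun Y : ℂ => ∑ j, co j * Y ^ m j)
          (∑ j, co j * ((m j : ℂ) * Y ^ (m j - 1))) Y := by
        apply HasDerivAt.fun_sum
        intro j _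
        exact (hasDerivAt_pow (m j) Y).const_mul (co j)
      simpa using h2.const_add 1
    exact ((hasDerivAt_id Y).sub ((h1.div_const D))).hasDerivWithinAt
  have hbound : ∀ Y ∈ Metric.closedBall c δ,
      ‖1 - (∑ j, co j * ((m j : ℂ) * Y ^ (m j - 1))) / D‖ ≤ 1/2 := by
    intro Y hY
    have heq : 1 - (∑ j, co j * ((m j : ℂ) * Y ^ (m j - 1))) / D
        = (D - (∑ j, co j * ((m j : ℂ) * Y ^ (m j - 1)))) / D := by
      field_simp
    rw [heq, norm_div]
    rw [div_le_iff₀ (norm_pos_iff.mpr hD)]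
    calc ‖D - ∑ j, co j * ((m j : ℂ) * Y ^ (m j - 1))‖
        = ‖(∑ j, co j * ((m j : ℂ) * Y ^ (m j - 1))) - D‖ := by rw [norm_sub_rev]
      _ ≤ ‖D‖ / 2 := hcontr Y hY
      _ = 1/2 * ‖D‖ := by ring
  have := hball.norm_image_sub_le_of_norm_hasDerivWithin_le hderiv hbound hy' hy
  simpa [dist_eq_norm] using this

lemma newton_main {r : ℕ} (co : Fin r → ℂ) (m : Fin r → ℕ) (c D : ℂ) (δ : ℝ)
    (hD : D ≠ 0) (hδ : 0 ≤ δ)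
    (hcontr : ∀ Y ∈ Metric.closedBall c δ,
      ‖(∑ j, co j * ((m j : ℂ) * Y ^ (m j - 1))) - D‖ ≤ ‖D‖ / 2)
    (hd0 : ‖1 + ∑ j, co j * c ^ m j‖ / ‖D‖ ≤ δ / 2) :
    ∀ k, seqY co m c D k ∈ Metric.closedBall c δ ∧
      seqY co m c D (k+1) ∈ Metric.closedBall c δ ∧
      dist (seqY co m c D (k+1)) (seqY co m c D k)
        ≤ (‖1 + ∑ j, co j * c ^ m j‖ / ‖D‖) * (1/2) ^ k ∧
      dist (seqY co m c D (k+1)) c ≤ (2 - (1/2) ^ k) * (‖1 + ∑ j, co j * c ^ m j‖ / ‖D‖) := by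
  set d0 := ‖1 + ∑ j, co j * c ^ m j‖ / ‖D‖ with hd0def
  have hd0nn : 0 ≤ d0 := div_nonneg (norm_nonneg _) (norm_nonneg _)
  have hΦ := newton_contr co m c D δ hD hcontr
  set f := seqY co m c D with hf
  have hstep : ∀ k, f (k+1) = f k - (1 + ∑ j, co j * f k ^ m j) / D := fun k => rfl
  have hdist1 : dist (f 1) (f 0) = d0 := by
    rw [hstep 0]
    rw [dist_eq_norm]
    have heq : f 0 - (1 + ∑ j, co j * f 0 ^ m j) / D - f 0
        = -((1 + ∑ j, co j * (f 0) ^ m j) / D) := by ring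
    rw [heq, norm_neg, norm_div]
    rfl
  intro k
  induction k with
  | zero =>
    refine ⟨?_, ?_, ?_, ?_⟩
    · rw [Metric.mem_closedBall]
      have h0 : dist (f 0) c = 0 := by simp [hf, seqY]
      rw [h0]; exact hδ
    · rw [Metric.mem_closedBall]
      calc dist (f 1) c = dist (f 1) (f 0) := rfl
        _ = d0 := hdist1
        _ ≤ δ := by linarith
    · rw [hdist1]; simp
    · calc dist (f 1) c = d0 := hdist1
        _ ≤ (2 - (1/2)^0) * d0 := by nlinarith
  | succ k ih =>
    obtain ⟨hk, hk1, hdk, hdc⟩ := ih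
    have hd2 : dist (f (k+2)) (f (k+1)) ≤ d0 * (1/2) ^ (k+1) := by
      have hc2 := hΦ (f (k+1)) hk1 (f k) hk
      simp only [] at hc2
      have he1 : f (k+2) = f (k+1) - (1 + ∑ j, co j * f (k+1) ^ m j) / D := hstep (k+1)
      have he0 : f (k+1) = f k - (1 + ∑ j, co j * f k ^ m j) / D := hstep k
      calc dist (f (k+2)) (f (k+1)) ≤ 1/2 * dist (f (k+1)) (f k) := by
            rw [he1]; nth_rewrite 3 [he0]; exact hc2
        _ ≤ 1/2 * (d0 * (1/2)^k) := by linarith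
        _ = d0 * (1/2)^(k+1) := by ring
    have hdc2 : dist (f (k+2)) c ≤ (2 - (1/2)^(k+1)) * d0 := by
      calc dist (f (k+2)) c ≤ dist (f (k+2)) (f (k+1)) + dist (f (k+1)) c := dist_triangle _ _ _
        _ ≤ d0 * (1/2)^(k+1) + (2 - (1/2)^k) * d0 := add_le_add hd2 hdc
        _ = (2 - (1/2)^(k+1)) * d0 := by ring
    refine ⟨hk1, ?_, hd2, hdc2⟩
    rw [Metric.mem_closedBall]
    have hpow : (0:ℝ) ≤ (1/2:ℝ)^(k+1) := by positivity
    have hpow1 : (1/2:ℝ)^(k+1) ≤ 1 := by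
      apply pow_le_one₀ <;> norm_num
    calc dist (f (k+2)) c ≤ (2 - (1/2)^(k+1)) * d0 := hdc2
      _ ≤ 2 * d0 := by nlinarith
      _ ≤ δ := by linarith

set_option maxHeartbeats 1600000 in
/-- Puiseux theorem for the generalized polynomial `W_{μ,σ⁰}(X,Y)` after
the substitution `Y = Y₁^q`: under the non-degeneracy assumption on the face
`F(α_{·e})`, there exists `ε₁ > 0`, depending only on `h` and `σ⁰` (in particular
independent of the prime `p` and of `τ⁰`), such that for every prime `p`, every
`τ⁰ ∈ ℝⁿ` and every `c` with `c^{q·θ·α̂_e} = e^{i(τ⁰·α̂_e)log p}·c₀` for some root `c₀`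
of `1 + Σ_{j∈Λ_e} a_j T^{q_j}`, one has `|c| = |c₀|^{1/(q·θ·α̂_e)}` and there is a
holomorphic function `ω_c` on `H = {X ∈ ℂ∖ℝ≤0 : |X| < ε₁}` with
`W̃(X, ω_c(X)) = 0` on `H` and `ω_c(X) → c` as `X → 0` in `H`, where
`W̃(X,Y) = 1 + Σ_j a_j e^{−i(τ⁰·α_{·j})log p} X^{σ⁰·α_{·j}} Y^{q·θ·α_{·j}}`
(principal-branch powers of `X`).  Membership `j ∈ Λ_e`, i.e. `α_{·j} ∈ ℚ·α_{·e}`, is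
rendered by the equivalent cross-product condition
`∀ ℓ ℓ', α_{ℓj}α_{ℓ'e} = α_{ℓ'j}α_{ℓe}`. -/
theorem stmt_17 (n r : ℕ) (hn : 1 ≤ n) (hr : 1 ≤ r)
    (a : Fin r → ℤ) (ha : ∀ j, a j ≠ 0)
    (α : Fin n → Fin r → ℕ) (hα : ∀ j, ∃ ℓ, α ℓ j ≠ 0)
    (e : Fin r) (hne : α ⟨n - 1, by omega⟩ e ≠ 0)
    -- α̂_e : the vector collinear with α_{·e} whose nonzero entries have gcd 1
    (αhat : Fin n → ℕ)
    (hcol : ∃ d : ℕ, 0 < d ∧ ∀ ℓ, α ℓ e = d * αhat ℓ)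
    (hgcd : Finset.univ.gcd αhat = 1)
    -- the multipliers q_j for j ∈ Λ_e
    (qfun : Fin r → ℕ)
    (hqfun : ∀ j, (∀ ℓ ℓ' : Fin n, α ℓ j * α ℓ' e = α ℓ' j * α ℓ e) →
      0 < qfun j ∧ ∀ ℓ, α ℓ j = qfun j * αhat ℓ)
    -- non-degeneracy of the face F(α_{·e})
    (hnondeg : ∀ z : ℂ,
      Polynomial.rootMultiplicity z
        (1 + ∑ j ∈ Finset.univ.filter
            (fun j => ∀ ℓ ℓ' : Fin n, α ℓ j * α ℓ' e = α ℓ' j * α ℓ e),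
          Polynomial.C (a j : ℂ) * Polynomial.X ^ qfun j) ≤ 1)
    -- σ⁰ : on the face, positive on the linear forms attached to j ∉ Λ_e
    (σ0 : Fin n → ℝ)
    (hσ0e : ∑ ℓ, σ0 ℓ * (α ℓ e : ℝ) = 0)
    (hσ0pos : ∀ j, ¬ (∀ ℓ ℓ' : Fin n, α ℓ j * α ℓ' e = α ℓ' j * α ℓ e) →
      0 < ∑ ℓ, σ0 ℓ * (α ℓ j : ℝ))
    -- θ : θ·α̂_e = k0 is a positive integer and θ·α_{·j} > 0 for all j
    (θ : Fin n → ℚ) (k0 : ℕ) (hk0 : 0 < k0)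
    (hθhat : (k0 : ℚ) = ∑ ℓ, θ ℓ * (αhat ℓ : ℚ))
    (hθpos : ∀ j, 0 < ∑ ℓ, θ ℓ * (α ℓ j : ℚ))
    -- q : the smallest positive integer with q·θ·α_{·j} = m j ∈ ℕ≥1 for all j
    (q : ℕ) (hq : 0 < q) (m : Fin r → ℕ)
    (hm : ∀ j, 0 < m j ∧ (m j : ℚ) = (q : ℚ) * ∑ ℓ, θ ℓ * (α ℓ j : ℚ))
    (hqmin : ∀ q' : ℕ, 0 < q' →
      (∀ j, ∃ k' : ℕ, 0 < k' ∧ (k' : ℚ) = (q' : ℚ) * ∑ ℓ, θ ℓ * (α ℓ j : ℚ)) →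
      q ≤ q') :
    ∃ ε₁ : ℝ, 0 < ε₁ ∧
      ∀ (p : ℕ), p.Prime → ∀ (τ0 : Fin n → ℝ) (c c₀ : ℂ),
        (1 + ∑ j ∈ Finset.univ.filter
            (fun j => ∀ ℓ ℓ' : Fin n, α ℓ j * α ℓ' e = α ℓ' j * α ℓ e),
          (a j : ℂ) * c₀ ^ qfun j) = 0 →
        c ^ (q * k0) =
          Complex.exp (Complex.I * ((∑ ℓ, τ0 ℓ * (αhat ℓ : ℝ)) : ℝ) * (Real.log p)) * c₀ →
        ‖c‖ = ‖c₀‖ ^ (((q * k0 : ℕ) : ℝ))⁻¹ ∧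
        ∃ ω : ℂ → ℂ,
          DifferentiableOn ℂ ω {X : ℂ | X ∈ Complex.slitPlane ∧ ‖X‖ < ε₁} ∧
          (∀ X ∈ {X : ℂ | X ∈ Complex.slitPlane ∧ ‖X‖ < ε₁},
            1 + ∑ j, (a j : ℂ) *
                Complex.exp (-(Complex.I) * ((∑ ℓ, τ0 ℓ * (α ℓ j : ℝ)) : ℝ) * (Real.log p)) *
                X ^ (((∑ ℓ, σ0 ℓ * (α ℓ j : ℝ)) : ℝ) : ℂ) *
                ω X ^ m j = 0) ∧
          Filter.Tendsto ω
            (nhdsWithin 0 {X : ℂ | X ∈ Complex.slitPlane ∧ ‖X‖ < ε₁})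
            (nhds c) := by
  classical
  obtain ⟨d, hdpos, hde⟩ := hcol
  set Λf := Finset.univ.filter
      (fun j : Fin r => ∀ ℓ ℓ' : Fin n, α ℓ j * α ℓ' e = α ℓ' j * α ℓ e) with hΛf
  have hmem : ∀ j : Fin r, j ∈ Λf ↔ (∀ ℓ ℓ' : Fin n, α ℓ j * α ℓ' e = α ℓ' j * α ℓ e) := by
    intro j; simp [hΛf]
  have hΛq : ∀ j ∈ Λf, 0 < qfun j ∧ ∀ ℓ, α ℓ j = qfun j * αhat ℓ :=
    fun j hj => hqfun j ((hmem j).1 hj)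
  have hσhat : ∑ ℓ, σ0 ℓ * (αhat ℓ : ℝ) = 0 := by
    have h1 : ∑ ℓ, σ0 ℓ * (α ℓ e : ℝ) = d * ∑ ℓ, σ0 ℓ * (αhat ℓ : ℝ) := by
      rw [Finset.mul_sum]; apply Finset.sum_congr rfl; intro ℓ _
      rw [hde ℓ]; push_cast; ring
    have hd' : (0:ℝ) < d := by exact_mod_cast hdpos
    rw [hσ0e] at h1
    have := h1.symm
    rcases mul_eq_zero.1 this with h | h
    · exact absurd h hd'.ne'
    · exact h
  have hΛσ : ∀ j ∈ Λf, (∑ ℓ, σ0 ℓ * (α ℓ j : ℝ)) = 0 := by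
    intro j hj
    have h1 : ∑ ℓ, σ0 ℓ * (α ℓ j : ℝ) = qfun j * ∑ ℓ, σ0 ℓ * (αhat ℓ : ℝ) := by
      rw [Finset.mul_sum]; apply Finset.sum_congr rfl; intro ℓ _
      rw [(hΛq j hj).2 ℓ]; push_cast; ring
    rw [h1, hσhat, mul_zero]
  have hΛτ : ∀ j ∈ Λf, ∀ τ0 : Fin n → ℝ,
      (∑ ℓ, τ0 ℓ * (α ℓ j : ℝ)) = qfun j * ∑ ℓ, τ0 ℓ * (αhat ℓ : ℝ) := by
    intro j hj τ0
    rw [Finset.mul_sum]; apply Finset.sum_congr rfl; intro ℓ _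
    rw [(hΛq j hj).2 ℓ]; push_cast; ring
  have hm1 : ∀ j, 1 ≤ m j := fun j => (hm j).1
  set N := q * k0 with hN
  have hNpos : 0 < N := Nat.mul_pos hq hk0
  have hΛm : ∀ j ∈ Λf, m j = N * qfun j := by
    intro j hj
    have hQ : (m j : ℚ) = ((N * qfun j : ℕ) : ℚ) := by
      rw [(hm j).2]
      have h2 : ∑ ℓ, θ ℓ * (α ℓ j : ℚ) = (qfun j : ℚ) * ∑ ℓ, θ ℓ * (αhat ℓ : ℚ) := by
        rw [Finset.mul_sum]; apply Finset.sum_congr rfl; intro ℓ _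
        rw [(hΛq j hj).2 ℓ]; push_cast; ring
      rw [h2, ← hθhat]; push_cast [hN]; ring
    exact_mod_cast hQ
  obtain ⟨σm, hσm_pos, hσm_le⟩ :
      ∃ σm : ℝ, 0 < σm ∧ ∀ j ∉ Λf, σm ≤ ∑ ℓ, σ0 ℓ * (α ℓ j : ℝ) := by
    by_cases hJ : (Λfᶜ : Finset (Fin r)).Nonempty
    · obtain ⟨j₀, hj₀, hmin⟩ :=
        Finset.exists_min_image Λfᶜ (fun j => ∑ ℓ, σ0 ℓ * (α ℓ j : ℝ)) hJ
      refine ⟨_, hσ0pos j₀ ?_, fun j hj => hmin j (Finset.mem_compl.2 hj)⟩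
      have := Finset.mem_compl.1 hj₀
      rw [hmem] at this; exact this
    · refine ⟨1, one_pos, fun j hj => absurd (Finset.mem_compl.2 hj) ?_⟩
      rw [Finset.not_nonempty_iff_eq_empty] at hJ
      simp [hJ]
  set P : Polynomial ℂ := 1 + ∑ j ∈ Λf, Polynomial.C (a j : ℂ) * Polynomial.X ^ qfun j
    with hPdef
  have hPeval : ∀ z : ℂ, P.eval z = 1 + ∑ j ∈ Λf, (a j : ℂ) * z ^ qfun j := by
    intro z; simp [hPdef, Polynomial.eval_finset_sum]
  have hP0 : P ≠ 0 := by
    intro h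
    have h1 := hPeval 0
    rw [h, Polynomial.eval_zero] at h1
    have h2 : ∑ j ∈ Λf, (a j : ℂ) * (0:ℂ) ^ qfun j = 0 := by
      apply Finset.sum_eq_zero; intro j hj
      rw [zero_pow (hΛq j hj).1.ne', mul_zero]
    rw [h2] at h1; norm_num at h1
  have hc0ne : ∀ c₀ : ℂ, P.eval c₀ = 0 → c₀ ≠ 0 := by
    intro c₀ h hc
    rw [hc, hPeval] at h
    have h2 : ∑ j ∈ Λf, (a j : ℂ) * (0:ℂ) ^ qfun j = 0 := by
      apply Finset.sum_eq_zero; intro j hj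
      rw [zero_pow (hΛq j hj).1.ne', mul_zero]
    rw [h2] at h; norm_num at h
  have hBne : ∀ c₀ : ℂ, P.eval c₀ = 0 →
      (∑ j ∈ Λf, (a j : ℂ) * (qfun j : ℂ) * c₀ ^ qfun j) ≠ 0 := by
    intro c₀ hroot
    have hder : ¬ (Polynomial.derivative P).IsRoot c₀ := by
      intro hd0
      have h1 := (Polynomial.one_lt_rootMultiplicity_iff_isRoot hP0).2 ⟨hroot, hd0⟩
      have h2 := hnondeg c₀
      omega
    have hdeval : (Polynomial.derivative P).eval c₀
        = ∑ j ∈ Λf, (a j : ℂ) * ((qfun j : ℂ) * c₀ ^ (qfun j - 1)) := by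
      rw [hPdef]
      simp [Polynomial.derivative_sum, Polynomial.derivative_X_pow,
        Polynomial.eval_finset_sum, mul_assoc]
    intro hB0
    apply hder
    have hc0 := hc0ne c₀ hroot
    have hfac : ∑ j ∈ Λf, (a j : ℂ) * (qfun j : ℂ) * c₀ ^ qfun j
        = c₀ * ∑ j ∈ Λf, (a j : ℂ) * ((qfun j : ℂ) * c₀ ^ (qfun j - 1)) := by
      rw [Finset.mul_sum]; apply Finset.sum_congr rfl; intro j hj
      have hpp : c₀ ^ qfun j = c₀ * c₀ ^ (qfun j - 1) := by
        rw [← pow_succ', Nat.sub_add_cancel (hΛq j hj).1]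
      rw [hpp]; ring
    rw [hfac] at hB0
    rcases mul_eq_zero.1 hB0 with h | h
    · exact absurd h hc0
    · show (Polynomial.derivative P).eval c₀ = 0
      rw [hdeval]; exact h
  have key : ∀ c₀ : ℂ, P.eval c₀ = 0 →
      ∃ ε : ℝ, 0 < ε ∧ ∀ (p : ℕ), p.Prime → ∀ (τ0 : Fin n → ℝ) (c : ℂ),
        c ^ N = Complex.exp (Complex.I * ((∑ ℓ, τ0 ℓ * (αhat ℓ : ℝ)) : ℝ) * (Real.log p)) * c₀ →
        ‖c‖ = ‖c₀‖ ^ ((N : ℝ))⁻¹ ∧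
        ∃ ω : ℂ → ℂ,
          DifferentiableOn ℂ ω {X : ℂ | X ∈ Complex.slitPlane ∧ ‖X‖ < ε} ∧
          (∀ X ∈ {X : ℂ | X ∈ Complex.slitPlane ∧ ‖X‖ < ε},
            1 + ∑ j, (a j : ℂ) *
                Complex.exp (-(Complex.I) * ((∑ ℓ, τ0 ℓ * (α ℓ j : ℝ)) : ℝ) * (Real.log p)) *
                X ^ (((∑ ℓ, σ0 ℓ * (α ℓ j : ℝ)) : ℝ) : ℂ) *
                ω X ^ m j = 0) ∧
          Filter.Tendsto ω
            (nhdsWithin 0 {X : ℂ | X ∈ Complex.slitPlane ∧ ‖X‖ < ε})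
            (nhds c) := by
    intro c₀ hroot
    have hc₀ : c₀ ≠ 0 := hc0ne c₀ hroot
    have hB : (∑ j ∈ Λf, (a j : ℂ) * (qfun j : ℂ) * c₀ ^ qfun j) ≠ 0 := hBne c₀ hroot
    set B := ∑ j ∈ Λf, (a j : ℂ) * (qfun j : ℂ) * c₀ ^ qfun j with hBdef
    set R := ‖c₀‖ ^ ((N : ℝ))⁻¹ with hRdef
    have hR : 0 < R := Real.rpow_pos_of_pos (norm_pos_iff.2 hc₀) _
    set b := ‖B‖ with hbdef
    have hb : 0 < b := norm_pos_iff.2 hB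
    set dn := (N : ℝ) * b / R with hdndef
    have hdn : 0 < dn := by
      apply div_pos _ hR
      have hN' : (0:ℝ) < (N:ℝ) := by exact_mod_cast hNpos
      exact mul_pos hN' hb
    set C₁ := ∑ j ∈ Λf, ‖(a j : ℂ)‖ * (m j : ℝ) * (((m j - 1 : ℕ) : ℝ) * (2*R) ^ (m j - 1 - 1))
      with hC₁def
    set C₂ := ∑ j ∈ Λfᶜ, ‖(a j : ℂ)‖ * (m j : ℝ) * (2*R) ^ (m j - 1) with hC₂def
    set C₃ := ∑ j ∈ Λfᶜ, ‖(a j : ℂ)‖ * R ^ (m j) with hC₃def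
    have hC₁ : 0 ≤ C₁ := Finset.sum_nonneg fun j _ => by positivity
    have hC₂ : 0 ≤ C₂ := Finset.sum_nonneg fun j _ => by positivity
    have hC₃ : 0 ≤ C₃ := Finset.sum_nonneg fun j _ => by positivity
    set δ := min R (dn / (4 * (C₁ + 1))) with hδdef
    have h4C₁ : (0:ℝ) < 4 * (C₁ + 1) := by linarith
    have hδ : 0 < δ := lt_min hR (div_pos hdn h4C₁)
    have hδR : δ ≤ R := min_le_left _ _
    have hδdn : C₁ * δ ≤ dn / 4 := by
      have h1 : δ ≤ dn / (4 * (C₁ + 1)) := min_le_right _ _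
      have h2 : C₁ * δ ≤ C₁ * (dn / (4 * (C₁ + 1))) := mul_le_mul_of_nonneg_left h1 hC₁
      refine h2.trans ?_
      rw [mul_div_assoc', div_le_div_iff₀ h4C₁ (by norm_num)]
      nlinarith [hdn.le, hC₁]
    set ε := min 1 (min ((dn / (4 * (C₂ + 1))) ^ (σm⁻¹)) ((dn * δ / (2 * (C₃ + 1))) ^ (σm⁻¹)))
      with hεdef
    have h4C₂ : (0:ℝ) < 4 * (C₂ + 1) := by linarith
    have h2C₃ : (0:ℝ) < 2 * (C₃ + 1) := by linarith
    have hε : 0 < ε := lt_min one_pos (lt_min (Real.rpow_pos_of_pos (div_pos hdn h4C₂) _)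
      (Real.rpow_pos_of_pos (div_pos (mul_pos hdn hδ) h2C₃) _))
    have hε1 : ε ≤ 1 := min_le_left _ _
    refine ⟨ε, hε, ?_⟩
    intro p hp τ0 c hc
    set H := {X : ℂ | X ∈ Complex.slitPlane ∧ ‖X‖ < ε} with hHdef
    have hHopen : IsOpen H :=
      IsOpen.and Complex.isOpen_slitPlane (isOpen_lt continuous_norm continuous_const)
    have hXεσ : ∀ X ∈ H, ‖X‖ ^ σm ≤ ε ^ σm := by
      intro X hX
      exact Real.rpow_le_rpow (norm_nonneg _) hX.2.le hσm_pos.le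
    have hε2 : C₂ * ε ^ σm ≤ dn / 4 := by
      have h1 : ε ≤ (dn / (4 * (C₂ + 1))) ^ (σm⁻¹) := le_trans (min_le_right _ _) (min_le_left _ _)
      have h2 : ε ^ σm ≤ dn / (4 * (C₂ + 1)) := by
        calc ε ^ σm ≤ ((dn / (4 * (C₂ + 1))) ^ (σm⁻¹)) ^ σm :=
              Real.rpow_le_rpow hε.le h1 hσm_pos.le
          _ = dn / (4 * (C₂ + 1)) := Real.rpow_inv_rpow (div_pos hdn h4C₂).le hσm_pos.ne'
      have h3 : C₂ * ε ^ σm ≤ C₂ * (dn / (4 * (C₂ + 1))) := mul_le_mul_of_nonneg_left h2 hC₂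
      refine h3.trans ?_
      rw [mul_div_assoc', div_le_div_iff₀ h4C₂ (by norm_num)]
      nlinarith [hdn.le, hC₂]
    have hε3 : C₃ * ε ^ σm ≤ dn * δ / 2 := by
      have h1 : ε ≤ (dn * δ / (2 * (C₃ + 1))) ^ (σm⁻¹) :=
        le_trans (min_le_right _ _) (min_le_right _ _)
      have h2 : ε ^ σm ≤ dn * δ / (2 * (C₃ + 1)) := by
        calc ε ^ σm ≤ ((dn * δ / (2 * (C₃ + 1))) ^ (σm⁻¹)) ^ σm :=
              Real.rpow_le_rpow hε.le h1 hσm_pos.le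
          _ = dn * δ / (2 * (C₃ + 1)) := Real.rpow_inv_rpow (div_pos (mul_pos hdn hδ) h2C₃).le hσm_pos.ne'
      have h3 : C₃ * ε ^ σm ≤ C₃ * (dn * δ / (2 * (C₃ + 1))) := mul_le_mul_of_nonneg_left h2 hC₃
      refine h3.trans ?_
      rw [mul_div_assoc', div_le_div_iff₀ h2C₃ (by norm_num)]
      nlinarith [mul_pos hdn hδ, hC₃]
    have hnormE : ‖Complex.exp (Complex.I * ((∑ ℓ, τ0 ℓ * (αhat ℓ : ℝ)) : ℝ) * (Real.log p))‖ = 1 := by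
      have hh : Complex.I * ((∑ ℓ, τ0 ℓ * (αhat ℓ : ℝ)) : ℝ) * ((Real.log p : ℝ) : ℂ)
          = (((∑ ℓ, τ0 ℓ * (αhat ℓ : ℝ)) * Real.log p : ℝ) : ℂ) * Complex.I := by
        push_cast; ring
      rw [hh, Complex.norm_exp_ofReal_mul_I]
    have hnormc : ‖c‖ = R := by
      have h1 : ‖c‖ ^ N = ‖c₀‖ := by
        rw [← norm_pow, hc, norm_mul, hnormE, one_mul]
      rw [hRdef, ← h1, Real.pow_rpow_inv_natCast (norm_nonneg c) hNpos.ne']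
    have hcne : c ≠ 0 := by
      intro h0; rw [h0, norm_zero] at hnormc; exact hR.ne hnormc
    set Eneg : Fin r → ℂ := fun j =>
      Complex.exp (-(Complex.I) * ((∑ ℓ, τ0 ℓ * (α ℓ j : ℝ)) : ℝ) * (Real.log p)) with hEnegdef
    set sσ : Fin r → ℝ := fun j => ∑ ℓ, σ0 ℓ * (α ℓ j : ℝ) with hsσdef
    set co : Fin r → ℂ → ℂ := fun j X => (a j : ℂ) * Eneg j * X ^ ((sσ j : ℝ) : ℂ) with hcodef
    have hEneg1 : ∀ j, ‖Eneg j‖ = 1 := by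
      intro j
      simp only [hEnegdef]
      have hh : -(Complex.I) * ((∑ ℓ, τ0 ℓ * (α ℓ j : ℝ)) : ℝ) * ((Real.log p : ℝ) : ℂ)
          = ((-((∑ ℓ, τ0 ℓ * (α ℓ j : ℝ)) * Real.log p) : ℝ) : ℂ) * Complex.I := by
        push_cast; ring
      rw [hh, Complex.norm_exp_ofReal_mul_I]
    have hrot : ∀ j ∈ Λf, Eneg j * c ^ m j = c₀ ^ qfun j := by
      intro j hj
      have ht : ((∑ ℓ, τ0 ℓ * (α ℓ j : ℝ)) : ℝ)
          = (qfun j : ℝ) * (∑ ℓ, τ0 ℓ * (αhat ℓ : ℝ)) := hΛτ j hj τ0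
      have hcm : c ^ m j
          = (Complex.exp (Complex.I * ((∑ ℓ, τ0 ℓ * (αhat ℓ : ℝ)) : ℝ) * (Real.log p))) ^ qfun j
            * c₀ ^ qfun j := by
        rw [hΛm j hj, pow_mul, hc, mul_pow]
      rw [hcm, ← mul_assoc, hEnegdef]
      have hE : (Complex.exp (Complex.I * ((∑ ℓ, τ0 ℓ * (αhat ℓ : ℝ)) : ℝ) * (Real.log p))) ^ qfun j
          = Complex.exp ((qfun j : ℂ)
              * (Complex.I * ((∑ ℓ, τ0 ℓ * (αhat ℓ : ℝ)) : ℝ) * (Real.log p))) := by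
        rw [← Complex.exp_nat_mul]
      rw [hE, ← Complex.exp_add]
      have harg : -(Complex.I) * ((∑ ℓ, τ0 ℓ * (α ℓ j : ℝ)) : ℝ) * ((Real.log p : ℝ) : ℂ)
          + (qfun j : ℂ) * (Complex.I * ((∑ ℓ, τ0 ℓ * (αhat ℓ : ℝ)) : ℝ) * ((Real.log p : ℝ) : ℂ))
            = 0 := by
        rw [ht]; push_cast; ring
      rw [harg, Complex.exp_zero, one_mul]
    have hcoΛ : ∀ j ∈ Λf, ∀ X : ℂ, co j X = (a j : ℂ) * Eneg j := by
      intro j hj X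
      simp only [hcodef]
      have h0 : sσ j = 0 := by simp only [hsσdef]; exact hΛσ j hj
      simp [h0]
    have hnormco : ∀ X ∈ H, ∀ j, ‖co j X‖ = ‖(a j : ℂ)‖ * ‖X‖ ^ (sσ j) := by
      intro X hX j
      have hXne : X ≠ 0 := Complex.slitPlane_ne_zero hX.1
      simp only [hcodef]
      rw [norm_mul, norm_mul, hEneg1 j, mul_one]
      congr 1
      rw [Complex.norm_cpow_of_ne_zero hXne]
      simp
    set D := ∑ j ∈ Λf, (a j : ℂ) * Eneg j * ((m j : ℂ) * c ^ (m j - 1)) with hDdef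
    have hcD : c * D = (N : ℂ) * B := by
      rw [hDdef, hBdef, Finset.mul_sum, Finset.mul_sum]
      apply Finset.sum_congr rfl
      intro j hj
      have hcc : c * c ^ (m j - 1) = c ^ m j := by
        rw [← pow_succ', Nat.sub_add_cancel (hm1 j)]
      calc c * ((a j : ℂ) * Eneg j * ((m j : ℂ) * c ^ (m j - 1)))
          = (a j : ℂ) * (m j : ℂ) * (Eneg j * (c * c ^ (m j - 1))) := by ring
        _ = (a j : ℂ) * (m j : ℂ) * (Eneg j * c ^ m j) := by rw [hcc]
        _ = (a j : ℂ) * (m j : ℂ) * c₀ ^ qfun j := by rw [hrot j hj]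
        _ = (N : ℂ) * ((a j : ℂ) * (qfun j : ℂ) * c₀ ^ qfun j) := by
            rw [hΛm j hj]; push_cast; ring
    have hnormD : ‖D‖ = dn := by
      have h1 : ‖c * D‖ = (N : ℝ) * b := by
        rw [hcD, norm_mul, hbdef]
        congr 1
        simp
      rw [norm_mul, hnormc] at h1
      rw [hdndef, ← h1]
      field_simp
    have hD : D ≠ 0 := by
      intro h0; rw [h0, norm_zero] at hnormD; exact hdn.ne hnormD
    have hYnorm : ∀ Y ∈ Metric.closedBall c δ, ‖Y‖ ≤ 2 * R := by
      intro Y hY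
      have h1 : ‖Y - c‖ ≤ δ := by rwa [Metric.mem_closedBall, dist_eq_norm] at hY
      calc ‖Y‖ = ‖c + (Y - c)‖ := by congr 1; ring
        _ ≤ ‖c‖ + ‖Y - c‖ := norm_add_le _ _
        _ ≤ R + δ := by rw [hnormc]; linarith
        _ ≤ 2 * R := by linarith
    have hcontrX : ∀ X ∈ H, ∀ Y ∈ Metric.closedBall c δ,
        ‖(∑ j, co j X * ((m j : ℂ) * Y ^ (m j - 1))) - D‖ ≤ ‖D‖ / 2 := by
      intro X hX Y hY
      have hXne : X ≠ 0 := Complex.slitPlane_ne_zero hX.1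
      have hX1 : ‖X‖ ≤ 1 := le_trans hX.2.le hε1
      have hYc : ‖Y - c‖ ≤ δ := by rwa [Metric.mem_closedBall, dist_eq_norm] at hY
      have hY2R : ‖Y‖ ≤ 2 * R := hYnorm Y hY
      have hc2R : ‖c‖ ≤ 2 * R := by rw [hnormc]; linarith
      have hsplit : (∑ j, co j X * ((m j : ℂ) * Y ^ (m j - 1)))
          = (∑ j ∈ Λf, co j X * ((m j : ℂ) * Y ^ (m j - 1)))
            + (∑ j ∈ Λfᶜ, co j X * ((m j : ℂ) * Y ^ (m j - 1))) :=
        (Finset.sum_add_sum_compl Λf _).symm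
      rw [hsplit, hDdef]
      have hcomb : (∑ j ∈ Λf, co j X * ((m j : ℂ) * Y ^ (m j - 1)))
            + (∑ j ∈ Λfᶜ, co j X * ((m j : ℂ) * Y ^ (m j - 1)))
            - (∑ j ∈ Λf, (a j : ℂ) * Eneg j * ((m j : ℂ) * c ^ (m j - 1)))
          = (∑ j ∈ Λf, ((a j : ℂ) * Eneg j * ((m j : ℂ) * Y ^ (m j - 1))
              - (a j : ℂ) * Eneg j * ((m j : ℂ) * c ^ (m j - 1))))
            + (∑ j ∈ Λfᶜ, co j X * ((m j : ℂ) * Y ^ (m j - 1))) := by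
        rw [Finset.sum_sub_distrib]
        have hco' : ∀ j ∈ Λf, co j X * ((m j : ℂ) * Y ^ (m j - 1))
            = (a j : ℂ) * Eneg j * ((m j : ℂ) * Y ^ (m j - 1)) := fun j hj => by
          rw [hcoΛ j hj X]
        rw [Finset.sum_congr rfl hco']; ring
      rw [hcomb]
      have hb1 : ‖∑ j ∈ Λf, ((a j : ℂ) * Eneg j * ((m j : ℂ) * Y ^ (m j - 1))
          - (a j : ℂ) * Eneg j * ((m j : ℂ) * c ^ (m j - 1)))‖ ≤ C₁ * δ := by
        calc ‖∑ j ∈ Λf, ((a j : ℂ) * Eneg j * ((m j : ℂ) * Y ^ (m j - 1))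
              - (a j : ℂ) * Eneg j * ((m j : ℂ) * c ^ (m j - 1)))‖
            ≤ ∑ j ∈ Λf, ‖(a j : ℂ) * Eneg j * ((m j : ℂ) * Y ^ (m j - 1))
              - (a j : ℂ) * Eneg j * ((m j : ℂ) * c ^ (m j - 1))‖ := norm_sum_le _ _
          _ ≤ ∑ j ∈ Λf, ‖(a j : ℂ)‖ * (m j : ℝ)
                * (((m j - 1 : ℕ) : ℝ) * (2*R) ^ (m j - 1 - 1)) * δ := by
              apply Finset.sum_le_sum
              intro j hj
              have heq : (a j : ℂ) * Eneg j * ((m j : ℂ) * Y ^ (m j - 1))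
                  - (a j : ℂ) * Eneg j * ((m j : ℂ) * c ^ (m j - 1))
                  = (a j : ℂ) * Eneg j * (m j : ℂ) * (Y ^ (m j - 1) - c ^ (m j - 1)) := by ring
              rw [heq, norm_mul, norm_mul, norm_mul]
              have hpw := aux_pow_sub_pow (y := Y) (z := c) (A := 2*R) hY2R hc2R (m j - 1)
              have h2 : ‖Y ^ (m j - 1) - c ^ (m j - 1)‖
                  ≤ ((m j - 1 : ℕ) : ℝ) * (2*R) ^ (m j - 1 - 1) * δ := by
                refine hpw.trans ?_
                exact mul_le_mul_of_nonneg_left hYc (by positivity)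
              calc ‖(a j : ℂ)‖ * ‖Eneg j‖ * ‖((m j : ℕ) : ℂ)‖ * ‖Y ^ (m j - 1) - c ^ (m j - 1)‖
                  = ‖(a j : ℂ)‖ * (m j : ℝ) * ‖Y ^ (m j - 1) - c ^ (m j - 1)‖ := by
                    rw [hEneg1 j, Complex.norm_natCast]; ring
                _ ≤ ‖(a j : ℂ)‖ * (m j : ℝ)
                    * (((m j - 1 : ℕ) : ℝ) * (2*R) ^ (m j - 1 - 1) * δ) :=
                    mul_le_mul_of_nonneg_left h2 (by positivity)
                _ = ‖(a j : ℂ)‖ * (m j : ℝ)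
                    * (((m j - 1 : ℕ) : ℝ) * (2*R) ^ (m j - 1 - 1)) * δ := by ring
          _ = C₁ * δ := by rw [hC₁def, ← Finset.sum_mul]
      have hb2 : ‖∑ j ∈ Λfᶜ, co j X * ((m j : ℂ) * Y ^ (m j - 1))‖ ≤ C₂ * ‖X‖ ^ σm := by
        calc ‖∑ j ∈ Λfᶜ, co j X * ((m j : ℂ) * Y ^ (m j - 1))‖
            ≤ ∑ j ∈ Λfᶜ, ‖co j X * ((m j : ℂ) * Y ^ (m j - 1))‖ := norm_sum_le _ _
          _ ≤ ∑ j ∈ Λfᶜ, ‖(a j : ℂ)‖ * (m j : ℝ) * (2*R) ^ (m j - 1) * ‖X‖ ^ σm := by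
              apply Finset.sum_le_sum
              intro j hj
              rw [norm_mul, hnormco X hX j, norm_mul, Complex.norm_natCast, norm_pow]
              have hXs : ‖X‖ ^ (sσ j) ≤ ‖X‖ ^ σm :=
                Real.rpow_le_rpow_of_exponent_ge (norm_pos_iff.2 hXne) hX1
                  (hσm_le j (Finset.mem_compl.1 hj))
              have hYp : ‖Y‖ ^ (m j - 1) ≤ (2*R) ^ (m j - 1) :=
                pow_le_pow_left₀ (norm_nonneg _) hY2R _
              calc ‖(a j : ℂ)‖ * ‖X‖ ^ sσ j * ((m j : ℝ) * ‖Y‖ ^ (m j - 1))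
                  = (m j : ℝ) * ‖Y‖ ^ (m j - 1) * ‖(a j : ℂ)‖ * ‖X‖ ^ sσ j := by ring
                _ ≤ (m j : ℝ) * (2*R) ^ (m j - 1) * ‖(a j : ℂ)‖ * ‖X‖ ^ σm := by
                    apply mul_le_mul ?_ hXs (Real.rpow_nonneg (norm_nonneg _) _) (by positivity)
                    apply mul_le_mul_of_nonneg_right ?_ (norm_nonneg _)
                    exact mul_le_mul_of_nonneg_left hYp (by positivity)
                _ = ‖(a j : ℂ)‖ * (m j : ℝ) * (2*R) ^ (m j - 1) * ‖X‖ ^ σm := by ring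
          _ = C₂ * ‖X‖ ^ σm := by rw [hC₂def, ← Finset.sum_mul]
      have hXb : C₂ * ‖X‖ ^ σm ≤ dn / 4 :=
        le_trans (mul_le_mul_of_nonneg_left (hXεσ X hX) hC₂) hε2
      calc ‖(∑ j ∈ Λf, ((a j : ℂ) * Eneg j * ((m j : ℂ) * Y ^ (m j - 1))
              - (a j : ℂ) * Eneg j * ((m j : ℂ) * c ^ (m j - 1))))
            + (∑ j ∈ Λfᶜ, co j X * ((m j : ℂ) * Y ^ (m j - 1)))‖
          ≤ ‖∑ j ∈ Λf, ((a j : ℂ) * Eneg j * ((m j : ℂ) * Y ^ (m j - 1))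
              - (a j : ℂ) * Eneg j * ((m j : ℂ) * c ^ (m j - 1)))‖
            + ‖∑ j ∈ Λfᶜ, co j X * ((m j : ℂ) * Y ^ (m j - 1))‖ := norm_add_le _ _
        _ ≤ C₁ * δ + C₂ * ‖X‖ ^ σm := add_le_add hb1 hb2
        _ ≤ dn / 4 + dn / 4 := add_le_add hδdn hXb
        _ = dn / 2 := by ring
        _ = ‖∑ j ∈ Λf, (a j : ℂ) * Eneg j * ((m j : ℂ) * c ^ (m j - 1))‖ / 2 := by
            rw [← hDdef, hnormD]
    have hstartX : ∀ X ∈ H, ‖1 + ∑ j, co j X * c ^ m j‖ ≤ C₃ * ‖X‖ ^ σm := by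
      intro X hX
      have hXne : X ≠ 0 := Complex.slitPlane_ne_zero hX.1
      have hX1 : ‖X‖ ≤ 1 := le_trans hX.2.le hε1
      have hsplit : (1 : ℂ) + ∑ j, co j X * c ^ m j
          = (1 + ∑ j ∈ Λf, co j X * c ^ m j) + ∑ j ∈ Λfᶜ, co j X * c ^ m j := by
        rw [← Finset.sum_add_sum_compl Λf (fun j => co j X * c ^ m j)]; ring
      have hzero1 : (1 : ℂ) + ∑ j ∈ Λf, co j X * c ^ m j = 0 := by
        have h1 : ∑ j ∈ Λf, co j X * c ^ m j = ∑ j ∈ Λf, (a j : ℂ) * c₀ ^ qfun j := by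
          apply Finset.sum_congr rfl; intro j hj
          rw [hcoΛ j hj X, mul_assoc, hrot j hj]
        rw [h1]
        have h2 := hroot
        rw [hPeval] at h2
        exact h2
      rw [hsplit, hzero1, zero_add]
      calc ‖∑ j ∈ Λfᶜ, co j X * c ^ m j‖
          ≤ ∑ j ∈ Λfᶜ, ‖co j X * c ^ m j‖ := norm_sum_le _ _
        _ ≤ ∑ j ∈ Λfᶜ, ‖(a j : ℂ)‖ * R ^ m j * ‖X‖ ^ σm := by
            apply Finset.sum_le_sum
            intro j hj
            rw [norm_mul, hnormco X hX j, norm_pow, hnormc]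
            have hXs : ‖X‖ ^ (sσ j) ≤ ‖X‖ ^ σm :=
              Real.rpow_le_rpow_of_exponent_ge (norm_pos_iff.2 hXne) hX1
                (hσm_le j (Finset.mem_compl.1 hj))
            calc ‖(a j : ℂ)‖ * ‖X‖ ^ sσ j * R ^ m j
                = ‖(a j : ℂ)‖ * R ^ m j * ‖X‖ ^ sσ j := by ring
              _ ≤ ‖(a j : ℂ)‖ * R ^ m j * ‖X‖ ^ σm :=
                  mul_le_mul_of_nonneg_left hXs (by positivity)
        _ = C₃ * ‖X‖ ^ σm := by rw [hC₃def, ← Finset.sum_mul]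
    have hd0X : ∀ X ∈ H, ‖1 + ∑ j, co j X * c ^ m j‖ / ‖D‖ ≤ δ / 2 := by
      intro X hX
      rw [hnormD, div_le_iff₀ hdn]
      calc ‖1 + ∑ j, co j X * c ^ m j‖ ≤ C₃ * ‖X‖ ^ σm := hstartX X hX
        _ ≤ C₃ * ε ^ σm := mul_le_mul_of_nonneg_left (hXεσ X hX) hC₃
        _ ≤ dn * δ / 2 := hε3
        _ = δ / 2 * dn := by ring
    have hmainX : ∀ X ∈ H, ∀ k, seqY (fun j => co j X) m c D k ∈ Metric.closedBall c δ ∧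
        seqY (fun j => co j X) m c D (k+1) ∈ Metric.closedBall c δ ∧
        dist (seqY (fun j => co j X) m c D (k+1)) (seqY (fun j => co j X) m c D k)
          ≤ (‖1 + ∑ j, co j X * c ^ m j‖ / ‖D‖) * (1/2) ^ k ∧
        dist (seqY (fun j => co j X) m c D (k+1)) c
          ≤ (2 - (1/2) ^ k) * (‖1 + ∑ j, co j X * c ^ m j‖ / ‖D‖) :=
      fun X hX => newton_main (fun j => co j X) m c D δ hD hδ.le (hcontrX X hX) (hd0X X hX)
    have hcauchy : ∀ X ∈ H, CauchySeq (seqY (fun j => co j X) m c D) := by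
      intro X hX
      apply cauchySeq_of_le_geometric (1/2) (‖1 + ∑ j, co j X * c ^ m j‖ / ‖D‖) (by norm_num)
      intro k
      rw [dist_comm]
      exact (hmainX X hX k).2.2.1
    set ω : ℂ → ℂ := fun X => Filter.limUnder Filter.atTop (seqY (fun j => co j X) m c D) with hωdef
    have hlim : ∀ X ∈ H, Filter.Tendsto (seqY (fun j => co j X) m c D)
        Filter.atTop (nhds (ω X)) := fun X hX => (hcauchy X hX).tendsto_limUnder
    have hdistlim : ∀ X ∈ H, ∀ k, dist (ω X) (seqY (fun j => co j X) m c D k)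
        ≤ 2 * (‖1 + ∑ j, co j X * c ^ m j‖ / ‖D‖) * (1/2) ^ k := by
      intro X hX k
      have hgeom := aux_geom_dist (f := seqY (fun j => co j X) m c D)
        (C := ‖1 + ∑ j, co j X * c ^ m j‖ / ‖D‖) (fun i => (hmainX X hX i).2.2.1)
      have htt : Filter.Tendsto
          (fun l => dist (seqY (fun j => co j X) m c D (l + k)) (seqY (fun j => co j X) m c D k))
          Filter.atTop (nhds (dist (ω X) (seqY (fun j => co j X) m c D k))) :=
        Filter.Tendsto.dist ((hlim X hX).comp (Filter.tendsto_add_atTop_nat k)) tendsto_const_nhds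
      refine le_of_tendsto htt (Filter.Eventually.of_forall fun l => ?_)
      have h1 := hgeom k l
      rw [add_comm l k]
      refine h1.trans ?_
      have h2 : (0:ℝ) ≤ (‖1 + ∑ j, co j X * c ^ m j‖ / ‖D‖) * (1/2) ^ k := by positivity
      nlinarith [pow_nonneg (by norm_num : (0:ℝ) ≤ 1/2) l]
    have h2d0δ : ∀ X ∈ H, 2 * (‖1 + ∑ j, co j X * c ^ m j‖ / ‖D‖) ≤ δ := by
      intro X hX; have := hd0X X hX; linarith
    have hTU : TendstoUniformlyOn (fun k X => seqY (fun j => co j X) m c D k) ω Filter.atTop H := by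
      rw [Metric.tendstoUniformlyOn_iff]
      intro ε' hε'
      have hδ2 : Filter.Tendsto (fun k : ℕ => δ * (1/2 : ℝ) ^ k) Filter.atTop (nhds 0) := by
        have h := tendsto_pow_atTop_nhds_zero_of_lt_one
          (by norm_num : (0:ℝ) ≤ 1/2) (by norm_num : (1/2 : ℝ) < 1)
        simpa using h.const_mul δ
      filter_upwards [hδ2.eventually (gt_mem_nhds hε')] with k hk
      intro X hX
      have h1 := hdistlim X hX k
      have h2 : 2 * (‖1 + ∑ j, co j X * c ^ m j‖ / ‖D‖) * (1/2) ^ k ≤ δ * (1/2) ^ k :=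
        mul_le_mul_of_nonneg_right (h2d0δ X hX) (by positivity)
      exact lt_of_le_of_lt (h1.trans h2) hk
    have hdiffk : ∀ k, DifferentiableOn ℂ (fun X => seqY (fun j => co j X) m c D k) H := by
      intro k
      induction k with
      | zero => exact differentiableOn_const c
      | succ k ih =>
        have heq : (fun X => seqY (fun j => co j X) m c D (k+1))
            = fun X => seqY (fun j => co j X) m c D k
              - (1 + ∑ j, co j X * (seqY (fun j => co j X) m c D k) ^ m j) / D := rfl
        rw [heq]
        have hcod : ∀ j : Fin r, DifferentiableOn ℂ (fun X => co j X) H := by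
          intro j
          simp only [hcodef]
          apply DifferentiableOn.mul (differentiableOn_const _)
          intro X hX
          exact (differentiableAt_id.cpow (differentiableAt_const _) hX.1).differentiableWithinAt
        refine DifferentiableOn.sub ih ?_
        refine DifferentiableOn.div_const ?_ D
        refine DifferentiableOn.add (differentiableOn_const 1) ?_
        apply DifferentiableOn.fun_sum
        intro j _
        exact (hcod j).mul (ih.pow _)
    have hωdiff : DifferentiableOn ℂ ω H :=
      (hTU.tendstoLocallyUniformlyOn).differentiableOn (Filter.Eventually.of_forall hdiffk) hHopen
    have hωzero : ∀ X ∈ H, (1 : ℂ) + ∑ j, co j X * ω X ^ m j = 0 := by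
      intro X hX
      have hΦcont : Continuous (fun Y : ℂ => Y - (1 + ∑ j, co j X * Y ^ m j) / D) := by
        refine Continuous.sub continuous_id ?_
        refine Continuous.div_const ?_ D
        exact continuous_const.add (continuous_finset_sum _ fun j _ =>
          continuous_const.mul (continuous_pow _))
      have h1 : Filter.Tendsto (fun k => seqY (fun j => co j X) m c D (k+1))
          Filter.atTop (nhds (ω X)) := (hlim X hX).comp (Filter.tendsto_add_atTop_nat 1)
      have h2 : Filter.Tendsto (fun k => seqY (fun j => co j X) m c D k
            - (1 + ∑ j, co j X * (seqY (fun j => co j X) m c D k) ^ m j) / D)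
          Filter.atTop (nhds (ω X - (1 + ∑ j, co j X * ω X ^ m j) / D)) :=
        (hΦcont.tendsto _).comp (hlim X hX)
      have h3 : ω X - (1 + ∑ j, co j X * ω X ^ m j) / D = ω X := tendsto_nhds_unique h2 h1
      have h4 : (1 + ∑ j, co j X * ω X ^ m j) / D = 0 := sub_eq_self.mp h3
      rcases div_eq_zero_iff.1 h4 with h | h
      · exact h
      · exact absurd h hD
    have hωtend : Filter.Tendsto ω (nhdsWithin 0 H) (nhds c) := by
      rw [tendsto_iff_dist_tendsto_zero]
      apply squeeze_zero' (g := fun X => 2 * (C₃ * ‖X‖ ^ σm / dn))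
        (Filter.Eventually.of_forall fun _ => dist_nonneg)
      · filter_upwards [self_mem_nhdsWithin] with X hX
        have h0 : dist (ω X) c = dist (ω X) (seqY (fun j => co j X) m c D 0) := rfl
        rw [h0]
        refine (hdistlim X hX 0).trans ?_
        have h1 : ‖1 + ∑ j, co j X * c ^ m j‖ / ‖D‖ ≤ C₃ * ‖X‖ ^ σm / dn := by
          rw [hnormD]
          gcongr
          exact hstartX X hX
        calc 2 * (‖1 + ∑ j, co j X * c ^ m j‖ / ‖D‖) * (1/2) ^ 0
            = 2 * (‖1 + ∑ j, co j X * c ^ m j‖ / ‖D‖) := by norm_num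
          _ ≤ 2 * (C₃ * ‖X‖ ^ σm / dn) := by linarith
      · have hnorm0 : Filter.Tendsto (fun X : ℂ => ‖X‖) (nhdsWithin 0 H) (nhds 0) := by
          have h : Filter.Tendsto (fun X : ℂ => ‖X‖) (nhdsWithin 0 H) (nhds ‖(0:ℂ)‖) :=
            (continuous_norm.tendsto (0 : ℂ)).mono_left (nhdsWithin_le_nhds (s := H))
          simpa using h
        have hrpow : Filter.Tendsto (fun x : ℝ => x ^ σm) (nhds 0) (nhds 0) := by
          have h := (Real.continuousAt_rpow_const 0 σm (Or.inr hσm_pos.le)).tendsto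
          simpa [Real.zero_rpow hσm_pos.ne'] using h
        have hcomp : Filter.Tendsto (fun X : ℂ => ‖X‖ ^ σm) (nhdsWithin 0 H) (nhds 0) :=
          hrpow.comp hnorm0
        have hfin := ((hcomp.const_mul C₃).div_const dn).const_mul 2
        simpa using hfin
    refine ⟨?_, ω, hωdiff, ?_, hωtend⟩
    · rw [hnormc, hRdef]
    · intro X hX
      have hz := hωzero X hX
      simpa only [hcodef, hEnegdef, hsσdef] using hz
  by_cases hS : ∃ z : ℂ, P.eval z = 0
  · set S := P.roots.toFinset with hSdef
    have hmemS : ∀ z : ℂ, z ∈ S ↔ P.eval z = 0 := by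
      intro z
      rw [hSdef, Multiset.mem_toFinset, Polynomial.mem_roots hP0]
      exact ⟨fun h => h, fun h => h⟩
    have hSne : S.Nonempty := by
      obtain ⟨z, hz⟩ := hS; exact ⟨z, (hmemS z).2 hz⟩
    have key' : ∀ x : {z // z ∈ S}, ∃ ε : ℝ, 0 < ε ∧
        ∀ (p : ℕ), p.Prime → ∀ (τ0 : Fin n → ℝ) (c : ℂ),
        c ^ N = Complex.exp (Complex.I * ((∑ ℓ, τ0 ℓ * (αhat ℓ : ℝ)) : ℝ) * (Real.log p)) * x.1 →
        ‖c‖ = ‖x.1‖ ^ ((N : ℝ))⁻¹ ∧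
        ∃ ω : ℂ → ℂ,
          DifferentiableOn ℂ ω {X : ℂ | X ∈ Complex.slitPlane ∧ ‖X‖ < ε} ∧
          (∀ X ∈ {X : ℂ | X ∈ Complex.slitPlane ∧ ‖X‖ < ε},
            1 + ∑ j, (a j : ℂ) *
                Complex.exp (-(Complex.I) * ((∑ ℓ, τ0 ℓ * (α ℓ j : ℝ)) : ℝ) * (Real.log p)) *
                X ^ (((∑ ℓ, σ0 ℓ * (α ℓ j : ℝ)) : ℝ) : ℂ) *
                ω X ^ m j = 0) ∧
          Filter.Tendsto ω
            (nhdsWithin 0 {X : ℂ | X ∈ Complex.slitPlane ∧ ‖X‖ < ε})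
            (nhds c) := fun x => key x.1 ((hmemS x.1).1 x.2)
    choose εf hεf using key'
    have hattach : S.attach.Nonempty := by
      rwa [Finset.attach_nonempty_iff]
    refine ⟨S.attach.inf' hattach (fun x => εf x), ?_, ?_⟩
    · rw [Finset.lt_inf'_iff]; intro x _; exact (hεf x).1
    · intro p hp τ0 c c₀ hrooteq hc
      have hroot : P.eval c₀ = 0 := by rw [hPeval]; exact hrooteq
      have hc₀mem : c₀ ∈ S := (hmemS c₀).2 hroot
      obtain ⟨hnorm, ω, hdiff, hzero, htd⟩ := (hεf ⟨c₀, hc₀mem⟩).2 p hp τ0 c hc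
      have hle : S.attach.inf' hattach (fun x => εf x) ≤ εf ⟨c₀, hc₀mem⟩ :=
        Finset.inf'_le _ (Finset.mem_attach _ _)
      have hsub : {X : ℂ | X ∈ Complex.slitPlane ∧ ‖X‖ < S.attach.inf' hattach (fun x => εf x)}
          ⊆ {X : ℂ | X ∈ Complex.slitPlane ∧ ‖X‖ < εf ⟨c₀, hc₀mem⟩} :=
        fun X hX => ⟨hX.1, lt_of_lt_of_le hX.2 hle⟩
      exact ⟨hnorm, ω, hdiff.mono hsub, fun X hX => hzero X (hsub hX),
        htd.mono_left (nhdsWithin_mono _ hsub)⟩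
  · refine ⟨1, one_pos, ?_⟩
    intro p hp τ0 c c₀ hrooteq hc
    exact absurd ⟨c₀, by rw [hPeval]; exact hrooteq⟩ hS
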